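/- The map E faithfully embeds N4 into the extended positive intuitionistic logic: for all sets of formulas Γ, Δ in the language {∧,∨,~,→} over variables {p_i}, Γ semantically entails Δ in N4 if and only if E(Γ) semantically entails E(Δ) in positive intuitionistic logic over the extended variable set {p_i} ∪ {q_i}. -/

import Mathlib

inductive N4Form : Type where
  | var : Nat → N4Form
  | and : N4Form → N4Form → N4Form
  | or  : N4Form → N4Form → N4Form
  | neg : N4Form → N4Form
  | imp : N4Form → N4Form → N4Form

/-- A Nelsonian model: a preorder with two monotone (upward-closed) valuations. -/
structure NModel where
  W : Type
  le : W → W → Prop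
  refl : ∀ w, le w w
  trans : ∀ {a b c}, le a b → le b c → le a c
  Vp : Nat → W → Prop
  Vn : Nat → W → Prop
  monoP : ∀ (n : Nat) {w v}, le w v → Vp n w → Vp n v
  monoN : ∀ (n : Nat) {w v}, le w v → Vn n w → Vn n v

/-- Verification (`true`) and falsification (`false`) in a Nelsonian model. -/
def NModel.sat (M : NModel) : N4Form → Bool → M.W → Prop
  | .var n, true, w => M.Vp n w
  | .var n, false, w => M.Vn n w
  | .and φ ψ, true, w => M.sat φ true w ∧ M.sat ψ true w
  | .and φ ψ, false, w => M.sat φ false w ∨ M.sat ψ false w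
  | .or φ ψ, true, w => M.sat φ true w ∨ M.sat ψ true w
  | .or φ ψ, false, w => M.sat φ false w ∧ M.sat ψ false w
  | .neg φ, b, w => M.sat φ (!b) w
  | .imp φ ψ, true, w => ∀ v, M.le w v → M.sat φ true v → M.sat ψ true v
  | .imp φ ψ, false, w => M.sat φ true w ∧ M.sat ψ false w

/-- N4-validity: verified at every world of every Nelsonian model. -/
def N4Valid (φ : N4Form) : Prop := ∀ (M : NModel) (w : M.W), M.sat φ true w

/-- Positive (negation-free) formulas over the extended variable set
`Sum.inl i` for `p i` and `Sum.inr i` for `q i`. -/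
inductive PosForm : Type where
  | var : Nat ⊕ Nat → PosForm
  | and : PosForm → PosForm → PosForm
  | or  : PosForm → PosForm → PosForm
  | imp : PosForm → PosForm → PosForm

/-- An extended intuitionistic Kripke model. -/
structure IModel where
  W : Type
  le : W → W → Prop
  refl : ∀ w, le w w
  trans : ∀ {a b c}, le a b → le b c → le a c
  V : Nat ⊕ Nat → W → Prop
  mono : ∀ (a : Nat ⊕ Nat) {w v}, le w v → V a w → V a v

def IModel.sat (M : IModel) : PosForm → M.W → Prop
  | .var a, w => M.V a w
  | .and φ ψ, w => M.sat φ w ∧ M.sat ψ w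
  | .or φ ψ, w => M.sat φ w ∨ M.sat ψ w
  | .imp φ ψ, w => ∀ v, M.le w v → M.sat φ v → M.sat ψ v

/-- The embedding `E`; `E φ true = E(φ)` and `E φ false = E(~φ)`. -/
def E : N4Form → Bool → PosForm
  | .var n, true => .var (.inl n)
  | .var n, false => .var (.inr n)
  | .and φ ψ, true => .and (E φ true) (E ψ true)
  | .and φ ψ, false => .or (E φ false) (E ψ false)
  | .or φ ψ, true => .or (E φ true) (E ψ true)
  | .or φ ψ, false => .and (E φ false) (E ψ false)
  | .neg φ, b => E φ (!b)
  | .imp φ ψ, true => .imp (E φ true) (E ψ true)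
  | .imp φ ψ, false => .and (E φ true) (E ψ false)

/-- Entailment in N4. -/
def N4Entails (Γ Δ : Set N4Form) : Prop :=
  ¬ ∃ (M : NModel) (w : M.W), (∀ φ ∈ Γ, M.sat φ true w) ∧ (∀ ψ ∈ Δ, ¬ M.sat ψ true w)

/-- Entailment in extended positive intuitionistic logic. -/
def ILEntails (Γ Δ : Set PosForm) : Prop :=
  ¬ ∃ (M : IModel) (w : M.W), (∀ φ ∈ Γ, M.sat φ w) ∧ (∀ ψ ∈ Δ, ¬ M.sat ψ w)

def NModel.toI (M : NModel) : IModel where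
  W := M.W
  le := M.le
  refl := M.refl
  trans := M.trans
  V := fun a w => match a with
    | .inl n => M.Vp n w
    | .inr n => M.Vn n w
  mono := fun a {w v} h => match a with
    | .inl n => M.monoP n h
    | .inr n => M.monoN n h

lemma NModel.satE (M : NModel) : ∀ (φ : N4Form) (b : Bool) (w : M.W),
    M.toI.sat (E φ b) w ↔ M.sat φ b w := by
  intro φ
  induction φ with
  | var n => intro b w; cases b <;> rfl
  | and φ ψ ihφ ihψ =>
    intro b w; cases b <;>
      simp [E, NModel.sat, IModel.sat, ihφ, ihψ]
  | or φ ψ ihφ ihψ =>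
    intro b w; cases b <;>
      simp [E, NModel.sat, IModel.sat, ihφ, ihψ]
  | neg φ ih =>
    intro b w; simp [E, NModel.sat, ih]
  | imp φ ψ ihφ ihψ =>
    intro b w; cases b <;>
      simp [E, NModel.sat, IModel.sat, ihφ, ihψ]
    exact ⟨fun h v hv hφ => (ihψ true v).1 (h v hv ((ihφ true v).2 hφ)), fun h v hv hφ => (ihψ true v).2 (h v hv ((ihφ true v).1 hφ))⟩

def IModel.toN (M : IModel) : NModel where
  W := M.W
  le := M.le
  refl := M.refl
  trans := M.trans
  Vp := fun n w => M.V (.inl n) w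
  Vn := fun n w => M.V (.inr n) w
  monoP := fun n {w v} h => M.mono (.inl n) h
  monoN := fun n {w v} h => M.mono (.inr n) h

lemma IModel.satE (M : IModel) : ∀ (φ : N4Form) (b : Bool) (w : M.W),
    M.sat (E φ b) w ↔ M.toN.sat φ b w := by
  intro φ
  induction φ with
  | var n => intro b w; cases b <;> rfl
  | and φ ψ ihφ ihψ =>
    intro b w; cases b <;>
      simp [E, NModel.sat, IModel.sat, ihφ, ihψ]
  | or φ ψ ihφ ihψ =>
    intro b w; cases b <;>
      simp [E, NModel.sat, IModel.sat, ihφ, ihψ]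
  | neg φ ih =>
    intro b w; simp [E, NModel.sat, ih]
  | imp φ ψ ihφ ihψ =>
    intro b w; cases b <;>
      simp [E, NModel.sat, IModel.sat, ihφ, ihψ]
    exact ⟨fun h v hv hφ => h v hv hφ, fun h v hv hφ => h v hv hφ⟩

/-- `E` faithfully embeds N4 into extended positive intuitionistic logic. -/
theorem E_faithful (Γ Δ : Set N4Form) :
    N4Entails Γ Δ ↔ ILEntails ((fun φ => E φ true) '' Γ) ((fun φ => E φ true) '' Δ) := by
  constructor
  · intro h hEx
    apply h
    obtain ⟨M, w, h1, h2⟩ := hEx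
    refine ⟨M.toN, w, fun φ hφ => (M.satE φ true w).1 (h1 _ ⟨φ, hφ, rfl⟩),
      fun ψ hψ hs => h2 _ ⟨ψ, hψ, rfl⟩ ((M.satE ψ true w).2 hs)⟩
  · intro h hEx
    apply h
    obtain ⟨M, w, h1, h2⟩ := hEx
    refine ⟨M.toI, w, ?_, ?_⟩
    · rintro _ ⟨φ, hφ, rfl⟩
      exact (M.satE φ true w).2 (h1 φ hφ)
    · rintro _ ⟨ψ, hψ, rfl⟩ hs
      exact h2 ψ hψ ((M.satE ψ true w).1 hs)
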